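/- arXiv:1912.00098 — 5 statements merged into one kernel-verified Lean document; each statement's English description precedes it below -/
import Mathlib

section
/- For every integer k ≥ 1, ∫_{-∞}^{∞} x^{2k} · e^{x/2}/(e^x + 1) dx = ((2k)!/4^k) · (ζ(2k+1, 1/4) − ζ(2k+1, 3/4)), where ζ(s, q) = Σ_{l=0}^{∞} 1/(l + q)^s is the Hurwitz zeta function. -/
open Real Filter MeasureTheory

/-- Hurwitz (generalized Riemann) zeta function ζ(s, q) = Σ_{l=0}^∞ (l + q)^{−s},
for natural exponent `s`. -/
noncomputable def hurwitzZetaNat (s : ℕ) (q : ℝ) : ℝ :=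
  ∑' l : ℕ, 1 / ((l : ℝ) + q) ^ s

/-!
The weight `e^{x/2} / (e^x + 1) = 1 / (2 cosh (x/2))` is even, so the integral over `ℝ` is twice
the one over `(0, ∞)`. There the weight is the geometric series `Σ_m (-1)^m e^{-(m + 1/2) x}`,
and `∫_0^∞ x^n e^{-r x} dx = n! / r^(n+1)`, so integrating termwise gives
`n! Σ_m (-1)^m / (m + 1/2)^(n+1)`. Splitting this alternating series into even and odd `m`
(note `2m + 1/2 = 2 (m + 1/4)` and `2m + 3/2 = 2 (m + 3/4)`) yields
`n! (ζ(n+1, 1/4) - ζ(n+1, 3/4)) / 2^(n+1)`.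
-/

open Set
open scoped Nat

lemma hasSum_hurwitzZetaNat {s : ℕ} (hs : 1 < s) {q : ℝ} (hq : 0 ≤ q) :
    HasSum (fun l : ℕ => 1 / ((l : ℝ) + q) ^ s) (hurwitzZetaNat s q) := by
  refine (((Real.summable_one_div_nat_add_rpow q s).mpr (mod_cast hs)).congr fun l => ?_).hasSum
  rw [abs_of_nonneg (by positivity), rpow_natCast]

lemma hasSum_neg_one_pow_div_nat_add_half_pow {s : ℕ} (hs : 1 < s) :
    HasSum (fun m : ℕ => (-1) ^ m / ((m : ℝ) + 1 / 2) ^ s)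
      ((hurwitzZetaNat s (1 / 4) - hurwitzZetaNat s (3 / 4)) / 2 ^ s) := by
  have heven := (hasSum_hurwitzZetaNat hs (q := 1 / 4) (by norm_num)).div_const (2 ^ s)
  have hodd := ((hasSum_hurwitzZetaNat hs (q := 3 / 4) (by norm_num)).div_const (2 ^ s)).neg
  rw [sub_div, sub_eq_add_neg]
  refine HasSum.even_add_odd (heven.congr_fun fun m => ?_) (hodd.congr_fun fun m => ?_)
  · push_cast
    rw [pow_mul, neg_one_sq, one_pow, div_div, ← mul_pow]
    ring_nf
  · push_cast
    rw [pow_succ, pow_mul, neg_one_sq, one_pow, div_div, ← mul_pow]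
    ring_nf

lemma integral_Ioi_pow_mul_exp_neg_mul (n : ℕ) {r : ℝ} (hr : 0 < r) :
    ∫ x in Ioi (0 : ℝ), x ^ n * exp (-(r * x)) = n ! / r ^ (n + 1) := by
  have h := integral_rpow_mul_exp_neg_mul_Ioi (a := n + 1) (by positivity) hr
  simp only [add_sub_cancel_right, rpow_natCast, Gamma_nat_eq_factorial] at h
  rw [h, ← Nat.cast_succ, rpow_natCast, div_pow, one_pow, one_div_mul_eq_div]

lemma integrableOn_Ioi_pow_mul_exp_neg_mul (n : ℕ) {r : ℝ} (hr : 0 < r) :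
    IntegrableOn (fun x : ℝ => x ^ n * exp (-(r * x))) (Ioi 0) :=
  .of_integral_ne_zero (by rw [integral_Ioi_pow_mul_exp_neg_mul n hr]; positivity)

/-- A real, natural-exponent form of `hasSum_mellin`. -/
lemma hasSum_integral_Ioi_pow_mul_of_hasSum_exp {ι : Type*} [Countable ι] {a p : ι → ℝ}
    {F : ℝ → ℝ} (n : ℕ) (hp : ∀ i, 0 < p i)
    (hF : ∀ t ∈ Ioi (0 : ℝ), HasSum (fun i => a i * exp (-(p i * t))) (F t))
    (h_sum : Summable fun i => |a i| / p i ^ (n + 1)) :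
    HasSum (fun i => n ! * a i / p i ^ (n + 1)) (∫ t in Ioi 0, t ^ n * F t) := by
  have hint (i : ι) : IntegrableOn (fun t => t ^ n * (a i * exp (-(p i * t)))) (Ioi 0) :=
    IntegrableOn.congr_fun ((integrableOn_Ioi_pow_mul_exp_neg_mul n (hp i)).const_mul (a i))
      (fun t _ => mul_left_comm _ _ _) measurableSet_Ioi
  have hintegral (i : ι) (c : ℝ) :
      ∫ t in Ioi (0 : ℝ), t ^ n * (c * exp (-(p i * t))) = n ! * c / p i ^ (n + 1) := by
    simp only [mul_left_comm _ c, integral_const_mul, integral_Ioi_pow_mul_exp_neg_mul n (hp i)]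
    ring
  have hnorm (i : ι) : ∫ t in Ioi (0 : ℝ), ‖t ^ n * (a i * exp (-(p i * t)))‖ =
      n ! * (|a i| / p i ^ (n + 1)) := by
    rw [← mul_div_assoc, ← hintegral]
    refine setIntegral_congr_fun measurableSet_Ioi fun t (ht : 0 < t) => ?_
    simp only [norm_mul, Real.norm_eq_abs, abs_of_pos (exp_pos _), abs_of_pos (pow_pos ht n)]
  have hsum := hasSum_integral_of_summable_integral_norm hint
    (by simpa only [hnorm] using h_sum.mul_left (n ! : ℝ))
  simp only [hintegral] at hsum
  rwa [setIntegral_congr_fun measurableSet_Ioi fun t ht => by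
    rw [← (hF t ht).tsum_eq, ← tsum_mul_left]]

lemma exp_half_div_exp_add_one (x : ℝ) : exp (x / 2) / (exp x + 1) = (2 * cosh (x / 2))⁻¹ := by
  have hx : exp x = exp (x / 2) * exp (x / 2) := by rw [← exp_add, add_halves]
  rw [cosh_eq, hx, exp_neg]
  field_simp

lemma hasSum_exp_half_div_exp_add_one (t : ℝ) (ht : 0 < t) :
    HasSum (fun m : ℕ => (-1) ^ m * exp (-(((m : ℝ) + 1 / 2) * t)))
      (exp (t / 2) / (exp t + 1)) := by
  have hr : |-exp (-t)| < 1 := by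
    rw [abs_neg, abs_of_pos (exp_pos _), exp_lt_one_iff]
    linarith
  have hgeom := (hasSum_geometric_of_abs_lt_one hr).mul_left (exp (-t / 2))
  have hval : exp (-t / 2) * (1 - -exp (-t))⁻¹ = exp (t / 2) / (exp t + 1) := by
    rw [sub_neg_eq_add, add_comm, ← div_eq_mul_inv, exp_half_div_exp_add_one,
      exp_half_div_exp_add_one, neg_div, cosh_neg]
  rw [← hval]
  refine hgeom.congr_fun fun m => ?_
  rw [neg_pow (exp (-t)), ← exp_nat_mul, mul_left_comm, ← exp_add]
  ring_nf

lemma integral_eq_two_mul_integral_Ioi_of_even {f : ℝ → ℝ} (hf : ∀ x, f (-x) = f x) :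
    ∫ x, f x = 2 * ∫ x in Ioi (0 : ℝ), f x := by
  rw [← integral_comp_abs]
  congr 1 with x
  rcases abs_choice x with hx | hx <;> rw [hx]
  exact (hf x).symm

lemma integral_Ioi_pow_mul_exp_half_div_exp_add_one {n : ℕ} (hn : 1 ≤ n) :
    ∫ x in Ioi (0 : ℝ), x ^ n * (exp (x / 2) / (exp x + 1)) =
      n ! * (hurwitzZetaNat (n + 1) (1 / 4) - hurwitzZetaNat (n + 1) (3 / 4)) / 2 ^ (n + 1) := by
  have hs : 1 < n + 1 := by omega
  have h_sum : Summable fun m : ℕ => |(-1 : ℝ) ^ m| / ((m : ℝ) + 1 / 2) ^ (n + 1) := by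
    simpa only [abs_pow, abs_neg, abs_one, one_pow] using
      (hasSum_hurwitzZetaNat hs (q := 1 / 2) (by norm_num)).summable
  refine ((hasSum_integral_Ioi_pow_mul_of_hasSum_exp n (fun m => by positivity)
    hasSum_exp_half_div_exp_add_one h_sum).unique ?_)
  simpa only [mul_div_assoc] using (hasSum_neg_one_pow_div_nat_add_half_pow hs).mul_left (n ! : ℝ)

theorem integral_even_power_logistic (k : ℕ) (hk : 1 ≤ k) :
    ∫ x : ℝ, x ^ (2 * k) * (Real.exp (x / 2) / (Real.exp x + 1)) =
      ((Nat.factorial (2 * k) : ℝ) / 4 ^ k) *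
        (hurwitzZetaNat (2 * k + 1) (1 / 4) - hurwitzZetaNat (2 * k + 1) (3 / 4)) := by
  have heven (x : ℝ) : (-x) ^ (2 * k) * (exp (-x / 2) / (exp (-x) + 1)) =
      x ^ (2 * k) * (exp (x / 2) / (exp x + 1)) := by
    rw [(even_two_mul k).neg_pow, exp_half_div_exp_add_one, exp_half_div_exp_add_one, neg_div,
      cosh_neg]
  rw [integral_eq_two_mul_integral_Ioi_of_even heven,
    integral_Ioi_pow_mul_exp_half_div_exp_add_one (by omega), pow_succ, pow_mul]
  field_simp
  norm_num
end

section
/- For every γ > 0, φ(γ) = (e^{−γ/4}/√(πγ)) · ∫_{-∞}^{∞} (e^{x/2}/(e^x + 1)) · e^{−x²/(4γ)} dx. -/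
/-! Since `1 - tanh (x/2) = 2 / (eˣ + 1)` and the `N(γ, 2γ)` density integrates to one,
`φ(γ)` is the integral of `2 / (eˣ + 1)` against that density. Completing the square,
`e^{-(x-γ)²/(4γ)} = e^{-γ/4} e^{x/2} e^{-x²/(4γ)}`, which gives the stated form. -/

open Real Filter MeasureTheory

/-- ψ(γ) = E[tanh(L/2)] for L ~ N(γ, 2γ). -/
noncomputable def psi (γ : ℝ) : ℝ :=
  ∫ x : ℝ, Real.tanh (x / 2) * (1 / Real.sqrt (4 * Real.pi * γ)) *
    Real.exp (-(x - γ) ^ 2 / (4 * γ))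

/-- φ(γ) = 1 − ψ(γ). -/
noncomputable def phi (γ : ℝ) : ℝ := 1 - psi γ

open ProbabilityTheory

@[fun_prop]
lemma Real.measurable_tanh : Measurable Real.tanh := by
  rw [show Real.tanh = fun t => sinh t / cosh t from funext tanh_eq_sinh_div_cosh]
  fun_prop

lemma Real.one_sub_tanh_half (x : ℝ) : 1 - tanh (x / 2) = 2 / (exp x + 1) := by
  have hx : exp x = exp (x / 2) * exp (x / 2) := by rw [← exp_add, add_halves]
  rw [tanh_eq_sinh_div_cosh, sinh_eq, cosh_eq, exp_neg, hx]
  field_simp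
  ring

lemma exp_neg_sq_sub_self_div (γ x : ℝ) (hγ : γ ≠ 0) :
    exp (-(x - γ) ^ 2 / (4 * γ)) = exp (-γ / 4) * exp (x / 2) * exp (-x ^ 2 / (4 * γ)) := by
  rw [← exp_add, ← exp_add]
  congr 1
  field_simp
  ring

lemma gaussianPDFReal_toNNReal_two_mul {γ : ℝ} (hγ : 0 ≤ γ) (x : ℝ) :
    gaussianPDFReal γ (2 * γ).toNNReal x =
      1 / √(4 * π * γ) * exp (-(x - γ) ^ 2 / (4 * γ)) := by
  rw [gaussianPDFReal, Real.coe_toNNReal _ (by positivity), one_div]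
  ring_nf

lemma integral_one_sub_mul_gaussianPDFReal {f : ℝ → ℝ} {C : ℝ} (hf : AEStronglyMeasurable f)
    (hfC : ∀ x, ‖f x‖ ≤ C) (μ : ℝ) {v : NNReal} (hv : v ≠ 0) :
    ∫ x, (1 - f x) * gaussianPDFReal μ v x = 1 - ∫ x, f x * gaussianPDFReal μ v x := by
  simp_rw [sub_mul, one_mul]
  rw [integral_sub (integrable_gaussianPDFReal μ v)
      ((integrable_gaussianPDFReal μ v).bdd_mul hf (.of_forall hfC)),
    integral_gaussianPDFReal_eq_one μ hv]

lemma phi_eq_integral_gaussianPDFReal {γ : ℝ} (hγ : 0 < γ) :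
    phi γ = ∫ x, (1 - tanh (x / 2)) * gaussianPDFReal γ (2 * γ).toNNReal x := by
  have hv : (2 * γ).toNNReal ≠ 0 := by simpa using hγ
  have htanh : Measurable fun x : ℝ => tanh (x / 2) := by fun_prop
  rw [integral_one_sub_mul_gaussianPDFReal htanh.aestronglyMeasurable
      (fun x => (abs_tanh_lt_one _).le) γ hv, phi, psi]
  simp_rw [gaussianPDFReal_toNNReal_two_mul hγ.le, mul_assoc]

theorem phi_integral_form (γ : ℝ) (hγ : 0 < γ) :
    phi γ = (Real.exp (-γ / 4) / Real.sqrt (Real.pi * γ)) *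
      ∫ x : ℝ, (Real.exp (x / 2) / (Real.exp x + 1)) * Real.exp (-x ^ 2 / (4 * γ)) := by
  have hsqrt : √(4 * π * γ) = 2 * √(π * γ) := by
    rw [mul_assoc, sqrt_mul zero_le_four, show (4 : ℝ) = 2 ^ 2 by norm_num, sqrt_sq zero_le_two]
  rw [phi_eq_integral_gaussianPDFReal hγ, ← integral_const_mul]
  congr 1 with x
  rw [one_sub_tanh_half, gaussianPDFReal_toNNReal_two_mul hγ.le, hsqrt,
    exp_neg_sq_sub_self_div γ x hγ.ne']
  have : 0 < √(π * γ) := by positivity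
  field_simp
end

section
/- The function ψ : (0, ∞) → ℝ is strictly increasing, satisfies 0 < ψ(γ) < 1 for every γ > 0, and has limits lim_{γ→0⁺} ψ(γ) = 0 and lim_{γ→∞} ψ(γ) = 1. -/
open Real Filter MeasureTheory

/-!
With `σ = √(2γ)` and `Z` standard Gaussian, `L = σ²/2 + σZ`, so `ψ(γ) = Ψ(σ)` where
`Ψ(σ) = 𝔼[f(σ²/2 + σZ)]` and `f = tanh(·/2)`. Differentiating under the integral and applying
Stein's identity `𝔼[Z g(Z)] = 𝔼[g'(Z)]` gives `Ψ'(σ) = σ 𝔼[(f' + f'')(L)]`, and `f' + f'' > 0`,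
so `Ψ` is strictly increasing on `[0, ∞)`. Moreover `Ψ` is continuous with `Ψ(0) = f(0) = 0`, and
`Ψ(σ) → 1` as `σ → ∞` by dominated convergence. The bounds `0 < ψ < 1` follow from strict
monotonicity and these two limits.
-/

open ProbabilityTheory Topology

namespace Real

theorem hasDerivAt_tanh (x : ℝ) : HasDerivAt tanh (1 - tanh x ^ 2) x := by
  have h := (hasDerivAt_sinh x).div (hasDerivAt_cosh x) (cosh_pos x).ne'
  rw [show tanh = sinh / cosh from funext tanh_eq_sinh_div_cosh]
  refine h.congr_deriv ?_
  rw [Pi.div_apply]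
  field_simp

@[fun_prop]
theorem continuous_tanh : Continuous tanh :=
  continuous_iff_continuousAt.2 fun x => (hasDerivAt_tanh x).continuousAt

theorem tendsto_tanh_atTop : Tendsto tanh atTop (𝓝 1) := by
  have h : Tendsto (fun x => 1 - 2 / (exp x * exp x + 1)) atTop (𝓝 (1 - 0)) :=
    tendsto_const_nhds.sub <| tendsto_const_nhds.div_atTop <|
      tendsto_atTop_add_const_right _ _ <| tendsto_exp_atTop.atTop_mul_atTop₀ tendsto_exp_atTop
  rw [sub_zero] at h
  refine h.congr fun x => ?_
  rw [tanh_eq, exp_neg]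
  field_simp
  ring

theorem hasDerivAt_tanh_half (x : ℝ) :
    HasDerivAt (fun x => tanh (x / 2)) ((1 - tanh (x / 2) ^ 2) / 2) x :=
  ((hasDerivAt_tanh _).comp x ((hasDerivAt_id' x).div_const 2)).congr_deriv (by ring)

end Real

theorem StrictMonoOn.lt_of_tendsto_atTop {α β : Type*} [LinearOrder α] [NoMaxOrder α]
    [LinearOrder β] [TopologicalSpace β] [OrderClosedTopology β] {f : α → β} {a x : α} {l : β}
    (hf : StrictMonoOn f (Set.Ici a)) (hlim : Tendsto f atTop (𝓝 l)) (hx : a ≤ x) : f x < l := by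
  have : Nonempty α := ⟨x⟩
  obtain ⟨y, hxy⟩ := exists_gt x
  have hy : a ≤ y := hx.trans hxy.le
  exact (hf hx hy hxy).trans_le <| ge_of_tendsto hlim <|
    (eventually_ge_atTop y).mono fun z hz => hf.monotoneOn hy (hy.trans hz) hz

theorem hasDerivAt_gaussianPDFReal_zero_one (x : ℝ) :
    HasDerivAt (gaussianPDFReal 0 1) (-x * gaussianPDFReal 0 1 x) x := by
  have hq : HasDerivAt (fun y : ℝ => -y ^ 2 / 2) (-x) x :=
    ((hasDerivAt_pow 2 x).neg.div_const 2).congr_deriv (by ring)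
  simp only [gaussianPDFReal_def, NNReal.coe_one, mul_one, sub_zero]
  exact (hq.exp.const_mul _).congr_deriv (by ring)

theorem integrable_mul_gaussianPDFReal_zero_one :
    Integrable fun x => x * gaussianPDFReal 0 1 x := by
  refine ((integrable_mul_exp_neg_mul_sq (b := 1 / 2) (by norm_num)).const_mul
    (√(2 * π))⁻¹).congr (ae_of_all _ fun x => ?_)
  simp only [gaussianPDFReal_def, NNReal.coe_one, mul_one, sub_zero]
  ring_nf

/-- Stein's identity. -/
theorem integral_mul_gaussianReal_eq_integral_deriv {g g' : ℝ → ℝ}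
    (hg : ∀ x, HasDerivAt g (g' x) x) (hg' : Continuous g') {C C' : ℝ}
    (hgC : ∀ x, |g x| ≤ C) (hg'C : ∀ x, |g' x| ≤ C') :
    ∫ x, x * g x ∂gaussianReal 0 1 = ∫ x, g' x ∂gaussianReal 0 1 := by
  set φ := gaussianPDFReal 0 1
  have hgc : Continuous g := continuous_iff_continuousAt.2 fun x => (hg x).continuousAt
  have hφ : Integrable φ := integrable_gaussianPDFReal 0 1
  have hφg := hφ.mul_bdd hgc.aestronglyMeasurable (ae_of_all _ hgC)
  have hφg' := hφ.mul_bdd hg'.aestronglyMeasurable (ae_of_all _ hg'C)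
  have hxφg := integrable_mul_gaussianPDFReal_zero_one.mul_bdd hgc.aestronglyMeasurable
    (ae_of_all _ hgC)
  have hder : ∀ x, HasDerivAt (fun x => φ x * g x) (φ x * g' x - x * φ x * g x) x := fun x =>
    ((hasDerivAt_gaussianPDFReal_zero_one x).mul (hg x)).congr_deriv (by ring)
  have hparts := integral_eq_zero_of_hasDerivAt_of_integrable hder (hφg'.sub hxφg) hφg
  rw [integral_sub hφg' hxφg, sub_eq_zero] at hparts
  simp only [integral_gaussianReal_eq_integral_smul one_ne_zero, smul_eq_mul]
  rw [hparts]
  congr 1; ext x; ring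

theorem integrable_id_gaussianReal (μ : ℝ) (v : NNReal) : Integrable id (gaussianReal μ v) :=
  (memLp_id_gaussianReal 1).integrable le_rfl

theorem gaussianReal_eq_map_standard (μ : ℝ) (v : NNReal) :
    gaussianReal μ v = (gaussianReal 0 1).map (fun z => μ + √v * z) := by
  rw [show (fun z => μ + √v * z) = (μ + ·) ∘ (√v * ·) from rfl,
    ← Measure.map_map (by fun_prop) (by fun_prop), gaussianReal_map_const_mul,
    gaussianReal_map_const_add]
  congr 1
  · simp
  · ext; simp

/-- `𝔼[f(L)]` for `L ~ 𝒩(σ²/2, σ²)`, the consistent Gaussian law of a log-likelihood ratio,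
realised as `L = σ²/2 + σZ` with `Z` standard Gaussian. -/
noncomputable def consistentGaussianExpectation (f : ℝ → ℝ) (σ : ℝ) : ℝ :=
  ∫ z, f (σ ^ 2 / 2 + σ * z) ∂gaussianReal 0 1

theorem consistentGaussianExpectation_zero (f : ℝ → ℝ) :
    consistentGaussianExpectation f 0 = f 0 := by
  simp [consistentGaussianExpectation]

section ConsistentGaussian

variable {f f' f'' : ℝ → ℝ} {C : ℝ}

theorem continuous_consistentGaussianExpectation (hf : Continuous f) (hfC : ∀ x, |f x| ≤ C) :
    Continuous (consistentGaussianExpectation f) :=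
  continuous_of_dominated (bound := fun _ => C)
    (fun σ => (hf.comp (by fun_prop)).aestronglyMeasurable)
    (fun σ => ae_of_all _ fun z => hfC _) (integrable_const C)
    (ae_of_all _ fun z => hf.comp (by fun_prop))

theorem tendsto_consistentGaussianExpectation_atTop {l : ℝ} (hf : Continuous f)
    (hfC : ∀ x, |f x| ≤ C) (hlim : Tendsto f atTop (𝓝 l)) :
    Tendsto (consistentGaussianExpectation f) atTop (𝓝 l) := by
  have hL : ∀ z : ℝ, Tendsto (fun σ : ℝ => σ ^ 2 / 2 + σ * z) atTop atTop := fun z =>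
    (tendsto_id.atTop_mul_atTop₀ (tendsto_atTop_add_const_right _ z
      (tendsto_id.atTop_div_const two_pos))).congr fun σ => by simp only [id]; ring
  have h := tendsto_integral_filter_of_dominated_convergence (μ := gaussianReal 0 1)
    (F := fun σ z => f (σ ^ 2 / 2 + σ * z)) (f := fun _ => l) (fun _ => C)
    (Eventually.of_forall fun σ => (hf.comp (by fun_prop)).aestronglyMeasurable)
    (Eventually.of_forall fun σ => ae_of_all _ fun z => hfC _) (integrable_const C)
    (ae_of_all _ fun z => hlim.comp (hL z))
  rwa [integral_const, probReal_univ, one_smul] at h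

theorem hasDerivAt_consistentGaussianExpectation' (hf : ∀ x, HasDerivAt f (f' x) x)
    (hf' : Continuous f') (hfC : ∀ x, |f x| ≤ C) (hf'C : ∀ x, |f' x| ≤ C) (σ : ℝ) :
    HasDerivAt (consistentGaussianExpectation f)
      (∫ z, (σ + z) * f' (σ ^ 2 / 2 + σ * z) ∂gaussianReal 0 1) σ := by
  have hfc : Continuous f := continuous_iff_continuousAt.2 fun x => (hf x).continuousAt
  have hL : ∀ z s, HasDerivAt (fun s : ℝ => s ^ 2 / 2 + s * z) (s + z) s := fun z s =>
    (((hasDerivAt_pow 2 s).div_const 2).add ((hasDerivAt_id s).mul_const z)).congr_deriv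
      (by simp)
  have hLc : ∀ s : ℝ, Continuous fun z : ℝ => s ^ 2 / 2 + s * z := by fun_prop
  have hbound : ∀ z, ∀ s ∈ Metric.ball σ 1,
      ‖(s + z) * f' (s ^ 2 / 2 + s * z)‖ ≤ (|σ| + 1 + |z|) * C := by
    intro z s hs
    have hs' : |s| ≤ |σ| + 1 := by
      have := abs_sub_abs_le_abs_sub s σ
      rw [Metric.mem_ball, Real.dist_eq] at hs
      linarith
    rw [norm_mul, Real.norm_eq_abs, Real.norm_eq_abs]
    exact mul_le_mul ((abs_add_le s z).trans (by linarith)) (hf'C _) (abs_nonneg _)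
      (by positivity)
  exact (hasDerivAt_integral_of_dominated_loc_of_deriv_le
    (F := fun s z => f (s ^ 2 / 2 + s * z)) (F' := fun s z => (s + z) * f' (s ^ 2 / 2 + s * z))
    (Metric.ball_mem_nhds σ one_pos)
    (Eventually.of_forall fun s => (hfc.comp (hLc s)).aestronglyMeasurable)
    (.of_bound (hfc.comp (hLc σ)).aestronglyMeasurable C (ae_of_all _ fun z => hfC _))
    ((continuous_const_add σ).mul (hf'.comp (hLc σ))).aestronglyMeasurable
    (ae_of_all _ hbound)
    (((integrable_const _).add (integrable_id_gaussianReal 0 1).abs).mul_const C)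
    (ae_of_all _ fun z s _ => (hf _ |>.comp s (hL z s)).congr_deriv (mul_comm _ _))).2

theorem integral_add_mul_eq_mul_integral_add_deriv (hf' : ∀ x, HasDerivAt f' (f'' x) x)
    (hf'' : Continuous f'') (hf'C : ∀ x, |f' x| ≤ C) (hf''C : ∀ x, |f'' x| ≤ C) (σ : ℝ) :
    ∫ z, (σ + z) * f' (σ ^ 2 / 2 + σ * z) ∂gaussianReal 0 1
      = σ * ∫ z, f' (σ ^ 2 / 2 + σ * z) + f'' (σ ^ 2 / 2 + σ * z) ∂gaussianReal 0 1 := by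
  have hf'c : Continuous f' := continuous_iff_continuousAt.2 fun x => (hf' x).continuousAt
  have hLc : Continuous fun z : ℝ => σ ^ 2 / 2 + σ * z := by fun_prop
  have hstein : ∫ z, z * f' (σ ^ 2 / 2 + σ * z) ∂gaussianReal 0 1
      = ∫ z, σ * f'' (σ ^ 2 / 2 + σ * z) ∂gaussianReal 0 1 :=
    integral_mul_gaussianReal_eq_integral_deriv
      (fun z => (hf' _).comp z (((hasDerivAt_id' z).const_mul σ).const_add _)
        |>.congr_deriv (by ring))
      (continuous_const.mul (hf''.comp hLc)) (fun z => hf'C _)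
      (C' := |σ| * C) (fun z => by rw [abs_mul]; gcongr; exact hf''C _)
  have hf'L : Integrable (fun z => f' (σ ^ 2 / 2 + σ * z)) (gaussianReal 0 1) :=
    .of_bound (hf'c.comp hLc).aestronglyMeasurable C (ae_of_all _ fun z => hf'C _)
  have hf''L : Integrable (fun z => f'' (σ ^ 2 / 2 + σ * z)) (gaussianReal 0 1) :=
    .of_bound (hf''.comp hLc).aestronglyMeasurable C (ae_of_all _ fun z => hf''C _)
  have hzf'L : Integrable (fun z => z * f' (σ ^ 2 / 2 + σ * z)) (gaussianReal 0 1) :=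
    (integrable_id_gaussianReal 0 1).mul_bdd (hf'c.comp hLc).aestronglyMeasurable
      (ae_of_all _ fun z => hf'C _)
  calc ∫ z, (σ + z) * f' (σ ^ 2 / 2 + σ * z) ∂gaussianReal 0 1
      = ∫ z, σ * f' (σ ^ 2 / 2 + σ * z) ∂gaussianReal 0 1
        + ∫ z, z * f' (σ ^ 2 / 2 + σ * z) ∂gaussianReal 0 1 := by
        rw [← integral_add (hf'L.const_mul σ) hzf'L]
        simp only [add_mul]
    _ = σ * ∫ z, f' (σ ^ 2 / 2 + σ * z) + f'' (σ ^ 2 / 2 + σ * z) ∂gaussianReal 0 1 := by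
        rw [integral_add hf'L hf''L, hstein, integral_const_mul, integral_const_mul, mul_add]

theorem hasDerivAt_consistentGaussianExpectation (hf : ∀ x, HasDerivAt f (f' x) x)
    (hf' : ∀ x, HasDerivAt f' (f'' x) x) (hf'' : Continuous f'')
    (hfC : ∀ x, |f x| ≤ C) (hf'C : ∀ x, |f' x| ≤ C) (hf''C : ∀ x, |f'' x| ≤ C) (σ : ℝ) :
    HasDerivAt (consistentGaussianExpectation f)
      (σ * ∫ z, f' (σ ^ 2 / 2 + σ * z) + f'' (σ ^ 2 / 2 + σ * z) ∂gaussianReal 0 1) σ :=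
  integral_add_mul_eq_mul_integral_add_deriv hf' hf'' hf'C hf''C σ ▸
    hasDerivAt_consistentGaussianExpectation' hf
      (continuous_iff_continuousAt.2 fun x => (hf' x).continuousAt) hfC hf'C σ

theorem strictMonoOn_consistentGaussianExpectation (hf : ∀ x, HasDerivAt f (f' x) x)
    (hf' : ∀ x, HasDerivAt f' (f'' x) x) (hf'' : Continuous f'')
    (hfC : ∀ x, |f x| ≤ C) (hf'C : ∀ x, |f' x| ≤ C) (hf''C : ∀ x, |f'' x| ≤ C)
    (hpos : ∀ x, 0 < f' x + f'' x) :
    StrictMonoOn (consistentGaussianExpectation f) (Set.Ici 0) := by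
  have hderiv := hasDerivAt_consistentGaussianExpectation hf hf' hf'' hfC hf'C hf''C
  refine strictMonoOn_of_deriv_pos (convex_Ici 0)
    (fun σ _ => (hderiv σ).continuousAt.continuousWithinAt) fun σ hσ => ?_
  rw [interior_Ici, Set.mem_Ioi] at hσ
  have hf'c : Continuous f' := continuous_iff_continuousAt.2 fun x => (hf' x).continuousAt
  have hLc : Continuous fun z : ℝ => σ ^ 2 / 2 + σ * z := by fun_prop
  rw [(hderiv σ).deriv]
  refine mul_pos hσ ((integral_pos_iff_support_of_nonneg (fun z => (hpos _).le) ?_).2 ?_)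
  · exact .of_bound ((hf'c.add hf'').comp hLc).aestronglyMeasurable (C + C)
      (ae_of_all _ fun z => (abs_add_le _ _).trans (add_le_add (hf'C _) (hf''C _)))
  · rw [Function.support_eq_univ fun z => (hpos _).ne']
    simp

end ConsistentGaussian

theorem strictMonoOn_consistentGaussianExpectation_tanh_half :
    StrictMonoOn (consistentGaussianExpectation fun x => tanh (x / 2)) (Set.Ici 0) := by
  have hf' : ∀ x, HasDerivAt (fun x => (1 - tanh (x / 2) ^ 2) / 2)
      (-(tanh (x / 2) * (1 - tanh (x / 2) ^ 2)) / 2) x := fun x =>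
    ((((hasDerivAt_tanh_half x).pow 2).const_sub 1).div_const 2).congr_deriv (by ring)
  refine strictMonoOn_consistentGaussianExpectation (C := 1) hasDerivAt_tanh_half hf'
    (by fun_prop) (fun x => (abs_tanh_lt_one _).le) (fun x => ?_) (fun x => ?_) (fun x => ?_) <;>
  obtain ⟨h₁, h₂⟩ := abs_lt.1 (abs_tanh_lt_one (x / 2))
  · rw [abs_le]; constructor <;> nlinarith
  · rw [abs_le]; constructor <;> nlinarith
  -- `f' + f'' = (1 - t²)(1 - t)/2` with `t = tanh (x/2) ∈ (-1, 1)`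
  · have h₃ : 0 < 1 - tanh (x / 2) ^ 2 := by nlinarith
    nlinarith [mul_pos h₃ (sub_pos.2 h₂)]

theorem psi_eq_consistentGaussianExpectation {γ : ℝ} (hγ : 0 < γ) :
    psi γ = consistentGaussianExpectation (fun x => tanh (x / 2)) √(2 * γ) := by
  have hv : (2 * γ).toNNReal ≠ 0 := (Real.toNNReal_pos.2 (by positivity)).ne'
  have hcoe : ((2 * γ).toNNReal : ℝ) = 2 * γ := Real.coe_toNNReal _ (by positivity)
  have hpsi : psi γ = ∫ x, tanh (x / 2) ∂gaussianReal γ (2 * γ).toNNReal := by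
    rw [integral_gaussianReal_eq_integral_smul hv, psi]
    congr 1; ext x
    rw [gaussianPDFReal, hcoe, smul_eq_mul, show 2 * π * (2 * γ) = 4 * π * γ by ring,
      show 2 * (2 * γ) = 4 * γ by ring]
    ring
  rw [hpsi, gaussianReal_eq_map_standard, integral_map (by fun_prop) (by fun_prop),
    consistentGaussianExpectation, Real.sq_sqrt (by positivity), hcoe,
    mul_div_cancel_left₀ γ two_ne_zero]

theorem psi_strictMono_bounds_limits :
    StrictMonoOn psi (Set.Ioi 0) ∧
    (∀ γ : ℝ, 0 < γ → 0 < psi γ ∧ psi γ < 1) ∧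
    Tendsto psi (nhdsWithin 0 (Set.Ioi 0)) (nhds 0) ∧
    Tendsto psi atTop (nhds 1) := by
  set Ψ := consistentGaussianExpectation fun x => tanh (x / 2)
  have hpsi : ∀ γ, 0 < γ → psi γ = Ψ √(2 * γ) := fun γ => psi_eq_consistentGaussianExpectation
  have hmono : StrictMonoOn Ψ (Set.Ici 0) := strictMonoOn_consistentGaussianExpectation_tanh_half
  have hzero : Ψ 0 = 0 := by simp [Ψ, consistentGaussianExpectation_zero]
  have hcont : Continuous Ψ :=
    continuous_consistentGaussianExpectation (by fun_prop) fun x => (abs_tanh_lt_one _).le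
  have htop : Tendsto Ψ atTop (𝓝 1) :=
    tendsto_consistentGaussianExpectation_atTop (by fun_prop) (fun x => (abs_tanh_lt_one _).le)
      (tendsto_tanh_atTop.comp (tendsto_id.atTop_div_const two_pos))
  refine ⟨fun a ha b hb hab => ?_, fun γ hγ => ?_, ?_, ?_⟩
  · rw [hpsi a ha, hpsi b hb]
    exact hmono (sqrt_nonneg _) (sqrt_nonneg _) (sqrt_lt_sqrt (by linarith [ha.out]) (by linarith))
  · rw [hpsi γ hγ]
    exact ⟨hzero ▸ hmono Set.self_mem_Ici (sqrt_nonneg _) (by positivity),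
      hmono.lt_of_tendsto_atTop htop (sqrt_nonneg _)⟩
  · have hσ : Tendsto (fun γ : ℝ => √(2 * γ)) (𝓝[>] 0) (𝓝 0) :=
      ((continuous_const.mul continuous_id).sqrt.tendsto' 0 0 (by simp)).mono_left
        nhdsWithin_le_nhds
    exact (hzero ▸ (hcont.tendsto 0).comp hσ).congr'
      (eventually_mem_nhdsWithin.mono fun γ hγ => (hpsi γ hγ).symm)
  · exact (htop.comp (tendsto_sqrt_atTop.comp (tendsto_id.const_mul_atTop two_pos))).congr'
      ((eventually_gt_atTop 0).mono fun γ hγ => (hpsi γ hγ).symm)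
end

section
/- For all nonzero real numbers a and b, a ⊞ b = sign(a) · sign(b) · min(|a|, |b|) + log(1 + e^{−|a+b|}) − log(1 + e^{−|a−b|}), where a ⊞ b = log((1 + e^{a+b})/(e^a + e^b)). -/
open Real

/-- The box-plus operation a ⊞ b = log((1 + e^a e^b)/(e^a + e^b)). -/
noncomputable def boxplus (a b : ℝ) : ℝ :=
  Real.log ((1 + Real.exp a * Real.exp b) / (Real.exp a + Real.exp b))

lemma log_one_add_exp (x : ℝ) :
    Real.log (1 + Real.exp x) = max 0 x + Real.log (1 + Real.exp (-|x|)) := by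
  have key : 1 + Real.exp x = Real.exp (max 0 x) * (1 + Real.exp (-|x|)) := by
    rcases le_total 0 x with h | h
    · rw [max_eq_right h, abs_of_nonneg h, mul_add, mul_one, ← Real.exp_add]
      rw [add_neg_cancel, Real.exp_zero]; ring
    · rw [max_eq_left h, abs_of_nonpos h, Real.exp_zero, one_mul, neg_neg]
  rw [key, Real.log_mul (Real.exp_ne_zero _) (by positivity), Real.log_exp]

lemma log_exp_add_exp (a b : ℝ) :
    Real.log (Real.exp a + Real.exp b) = max a b + Real.log (1 + Real.exp (-|a - b|)) := by
  have key : Real.exp a + Real.exp b = Real.exp (max a b) * (1 + Real.exp (-|a - b|)) := by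
    rcases le_total a b with h | h
    · rw [max_eq_right h, abs_of_nonpos (by linarith), mul_add, mul_one, ← Real.exp_add]
      ring_nf
    · rw [max_eq_left h, abs_of_nonneg (by linarith), mul_add, mul_one, ← Real.exp_add]
      ring_nf
  rw [key, Real.log_mul (Real.exp_ne_zero _) (by positivity), Real.log_exp]

theorem boxplus_min_sum_form (a b : ℝ) (ha : a ≠ 0) (hb : b ≠ 0) :
    boxplus a b =
      Real.sign a * Real.sign b * min |a| |b| +
        Real.log (1 + Real.exp (-|a + b|)) - Real.log (1 + Real.exp (-|a - b|)) := by
  have h1 : boxplus a b = Real.log (1 + Real.exp (a + b)) - Real.log (Real.exp a + Real.exp b) := by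
    unfold boxplus
    rw [← Real.exp_add, Real.log_div (by positivity) (by positivity)]
  rw [h1, log_one_add_exp, log_exp_add_exp]
  have key : max 0 (a + b) - max a b = Real.sign a * Real.sign b * min |a| |b| := by
    rcases ha.lt_or_gt with ha' | ha' <;> rcases hb.lt_or_gt with hb' | hb'
    · rw [Real.sign_of_neg ha', Real.sign_of_neg hb', abs_of_neg ha', abs_of_neg hb',
        min_def, max_def, max_def]
      split_ifs <;> linarith
    · rw [Real.sign_of_neg ha', Real.sign_of_pos hb', abs_of_neg ha', abs_of_pos hb',
        min_def, max_def, max_def]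
      split_ifs <;> linarith
    · rw [Real.sign_of_pos ha', Real.sign_of_neg hb', abs_of_pos ha', abs_of_neg hb',
        min_def, max_def, max_def]
      split_ifs <;> linarith
    · rw [Real.sign_of_pos ha', Real.sign_of_pos hb', abs_of_pos ha', abs_of_pos hb',
        min_def, max_def, max_def]
      split_ifs <;> linarith
  linarith [key]
end

section
/- Let A and B be independent, identically distributed real-valued random variables whose common law has a continuous probability density function f with cumulative distribution function F. Then the random variable X = sign(A) · sign(B) · min(|A|, |B|) has probability density function f_X(x) = 2 f(x) (1 − F(|x|)) + 2 f(−x) F(−|x|). -/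
/-!
For `t ≥ 0` the signed minimum exceeds `t` exactly when `A, B > t` or `A, B < -t`; for `t < 0` it
is at most `t` exactly when one of `A, B` is `≤ t` and the other `≥ -t`. By independence, with
`p = F t` and `q = F (-t)`, the distribution function of `X` is `1 - (1 - p)² - q²` for `t ≥ 0` and
`2p(1 - q)` for `t < 0`. Both branches are `2p(1 - q) - (max (p - q) 0)²`, a differentiable
function of `t` whose derivative is the claimed density and which vanishes at `-∞`; the
fundamental theorem of calculus on `(-∞, t]` then identifies the law of `X`.
-/

open Real MeasureTheory ProbabilityTheory Set Filter Topology

noncomputable def signedMin (a b : ℝ) : ℝ := Real.sign a * Real.sign b * min |a| |b|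

lemma Real.monotone_sign : Monotone Real.sign := by
  intro a b hab
  rcases lt_trichotomy a 0 with ha | rfl | ha <;> rcases lt_trichotomy b 0 with hb | rfl | hb <;>
    simp [Real.sign_of_neg, Real.sign_of_pos, *] <;> linarith

lemma measurable_signedMin : Measurable fun p : ℝ × ℝ => signedMin p.1 p.2 :=
  ((Real.monotone_sign.measurable.comp measurable_fst).mul
    (Real.monotone_sign.measurable.comp measurable_snd)).mul
    (measurable_fst.abs.min measurable_snd.abs)

lemma lt_signedMin_iff_of_nonneg {t : ℝ} (ht : 0 ≤ t) (a b : ℝ) :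
    t < signedMin a b ↔ (t < a ∧ t < b) ∨ (a < -t ∧ b < -t) := by
  unfold signedMin
  rcases lt_trichotomy a 0 with ha | rfl | ha <;> rcases lt_trichotomy b 0 with hb | rfl | hb <;>
    simp [Real.sign_of_neg, Real.sign_of_pos, abs_of_neg, abs_of_pos, *] <;> grind

lemma signedMin_le_iff_of_neg {t : ℝ} (ht : t < 0) (a b : ℝ) :
    signedMin a b ≤ t ↔ (-t ≤ a ∧ b ≤ t) ∨ (a ≤ t ∧ -t ≤ b) := by
  unfold signedMin
  rcases lt_trichotomy a 0 with ha | rfl | ha <;> rcases lt_trichotomy b 0 with hb | rfl | hb <;>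
    simp [Real.sign_of_neg, Real.sign_of_pos, abs_of_neg, abs_of_pos, *] <;> grind

noncomputable def signedMinCDF (F : ℝ → ℝ) (t : ℝ) : ℝ :=
  2 * F t * (1 - F (-t)) - max (F t - F (-t)) 0 ^ 2

noncomputable def signedMinDensity (f F : ℝ → ℝ) (x : ℝ) : ℝ :=
  2 * f x * (1 - F |x|) + 2 * f (-x) * F (-|x|)

lemma measureReal_prod_signedMin_le (ν : Measure ℝ) [IsProbabilityMeasure ν]
    [NullSingletonClass ν] (t : ℝ) :
    (ν.prod ν).real {p | signedMin p.1 p.2 ≤ t} = signedMinCDF (cdf ν) t := by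
  have hIio (s : ℝ) : ν.real (Iio s) = cdf ν s := by
    rw [measureReal_congr Iio_ae_eq_Iic, cdf_eq_real]
  have hIoi (s : ℝ) : ν.real (Ioi s) = 1 - cdf ν s := by
    rw [← compl_Iic, probReal_compl_eq_one_sub measurableSet_Iic, cdf_eq_real]
  have hIci (s : ℝ) : ν.real (Ici s) = 1 - cdf ν s := by
    rw [← compl_Iio, probReal_compl_eq_one_sub measurableSet_Iio, hIio]
  rcases le_or_gt 0 t with ht | ht
  · have hset : {p : ℝ × ℝ | signedMin p.1 p.2 ≤ t} =
        (Ioi t ×ˢ Ioi t ∪ Iio (-t) ×ˢ Iio (-t))ᶜ := by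
      ext p
      simp [← not_lt, lt_signedMin_iff_of_nonneg ht]
    have hdisj : Disjoint (Ioi t ×ˢ Ioi t) (Iio (-t) ×ˢ Iio (-t)) :=
      Disjoint.set_prod_left (Ioi_disjoint_Iio_of_le (by linarith)) _ _
    rw [hset, probReal_compl_eq_one_sub ((measurableSet_Ioi.prod measurableSet_Ioi).union
        (measurableSet_Iio.prod measurableSet_Iio)),
      measureReal_union hdisj (measurableSet_Iio.prod measurableSet_Iio), measureReal_prod_prod,
      measureReal_prod_prod, hIoi, hIio, signedMinCDF,
      max_eq_left (sub_nonneg.2 (monotone_cdf ν (by linarith)))]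
    ring
  · have hset : {p : ℝ × ℝ | signedMin p.1 p.2 ≤ t} =
        Ici (-t) ×ˢ Iic t ∪ Iic t ×ˢ Ici (-t) := by
      ext p
      simp [signedMin_le_iff_of_neg ht]
    have hdisj : Disjoint (Ici (-t) ×ˢ Iic t) (Iic t ×ˢ Ici (-t)) :=
      Disjoint.set_prod_left (Iic_disjoint_Ici.2 (by linarith)).symm _ _
    rw [hset, measureReal_union hdisj (measurableSet_Iic.prod measurableSet_Ici),
      measureReal_prod_prod, measureReal_prod_prod, hIci, ← cdf_eq_real, signedMinCDF,
      max_eq_right (sub_nonpos.2 (monotone_cdf ν (by linarith)))]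
    ring

lemma hasDerivAt_max_zero_sq (z : ℝ) : HasDerivAt (fun y : ℝ => max y 0 ^ 2) (2 * max z 0) z := by
  have hne : ∀ y ≠ (0 : ℝ), HasDerivAt (fun y : ℝ => max y 0 ^ 2) (2 * max y 0) y := by
    intro y hy
    rcases hy.lt_or_gt with hy | hy
    · refine (hasDerivAt_const y (0 : ℝ)).congr_deriv (by simp [hy.le])
        |>.congr_of_eventuallyEq ?_
      filter_upwards [Iio_mem_nhds hy] with w hw
      simp [(show w < 0 from hw).le]
    · refine (hasDerivAt_pow 2 y).congr_deriv (by simp [hy.le]) |>.congr_of_eventuallyEq ?_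
      filter_upwards [Ioi_mem_nhds hy] with w hw
      simp [(show 0 < w from hw).le]
  rcases eq_or_ne z 0 with rfl | hz
  · exact hasDerivAt_of_hasDerivAt_of_ne hne
      (by fun_prop : Continuous fun y : ℝ => max y 0 ^ 2).continuousAt
      (by fun_prop : Continuous fun y : ℝ => 2 * max y 0).continuousAt
  · exact hne z hz

lemma hasDerivAt_signedMinCDF {f F : ℝ → ℝ} (hF : ∀ x, HasDerivAt F (f x) x) (hmono : Monotone F)
    (x : ℝ) : HasDerivAt (signedMinCDF F) (signedMinDensity f F x) x := by
  have hFneg : HasDerivAt (fun y => F (-y)) (-f (-x)) x :=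
    ((hF (-x)).comp x (hasDerivAt_neg x)).congr_deriv (mul_neg_one _)
  have hmax := (hasDerivAt_max_zero_sq (F x - F (-x))).comp x ((hF x).fun_sub hFneg)
  refine HasDerivAt.congr_deriv (f := signedMinCDF F)
    ((((hF x).const_mul 2).fun_mul (hFneg.const_sub 1)).fun_sub hmax) ?_
  rcases le_or_gt 0 x with hx | hx
  · rw [signedMinDensity, abs_of_nonneg hx,
      max_eq_left (sub_nonneg.2 (hmono (show -x ≤ x by linarith)))]
    ring
  · simp only [signedMinDensity, abs_of_neg hx, neg_neg,
      max_eq_right (sub_nonpos.2 (hmono (show x ≤ -x by linarith)))]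
    ring

lemma tendsto_signedMinCDF_atBot {F : ℝ → ℝ} (hbot : Tendsto F atBot (𝓝 0))
    (htop : Tendsto F atTop (𝓝 1)) : Tendsto (signedMinCDF F) atBot (𝓝 0) := by
  have hneg : Tendsto (fun t => F (-t)) atBot (𝓝 1) := htop.comp tendsto_neg_atBot_atTop
  convert (((tendsto_const_nhds (x := (2 : ℝ))).mul hbot).mul
    ((tendsto_const_nhds (x := (1 : ℝ))).sub hneg)).sub
    (((hbot.sub hneg).max (tendsto_const_nhds (x := (0 : ℝ)))).pow 2) using 2
  · rfl
  · norm_num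

lemma signedMinDensity_nonneg {f F : ℝ → ℝ} (hf : 0 ≤ f) (hF0 : 0 ≤ F) (hF1 : F ≤ 1) (x : ℝ) :
    0 ≤ signedMinDensity f F x :=
  add_nonneg (mul_nonneg (mul_nonneg zero_le_two (hf x)) (sub_nonneg.2 (hF1 _)))
    (mul_nonneg (mul_nonneg zero_le_two (hf _)) (hF0 _))

lemma integrable_signedMinDensity {f F : ℝ → ℝ} (hf : Integrable f) (hf0 : 0 ≤ f)
    (hF : Continuous F) (hF0 : 0 ≤ F) (hF1 : F ≤ 1) : Integrable (signedMinDensity f F) := by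
  refine ((hf.const_mul 2).add (hf.comp_neg.const_mul 2)).mono' ?_ (ae_of_all _ fun x => ?_)
  · exact ((hf.aestronglyMeasurable.const_mul 2).mul
      (continuous_const.sub (hF.comp continuous_abs)).aestronglyMeasurable).add
      ((hf.comp_neg.aestronglyMeasurable.const_mul 2).mul
      (hF.comp continuous_abs.neg).aestronglyMeasurable)
  · rw [Real.norm_of_nonneg (signedMinDensity_nonneg hf0 hF0 hF1 x), signedMinDensity]
    have h1 :=
      mul_le_mul_of_nonneg_left (sub_le_self 1 (hF0 |x|)) (mul_nonneg zero_le_two (hf0 x))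
    have h2 := mul_le_mul_of_nonneg_left (hF1 (-|x|)) (mul_nonneg zero_le_two (hf0 (-x)))
    simp only [Pi.one_apply, mul_one] at h1 h2
    exact add_le_add h1 h2

lemma withDensity_Iic_of_hasDerivAt {g G : ℝ → ℝ} (hg : Integrable g) (hg0 : 0 ≤ g)
    (hG : ∀ x, HasDerivAt G (g x) x) (hbot : Tendsto G atBot (𝓝 0)) (t : ℝ) :
    volume.withDensity (fun x => ENNReal.ofReal (g x)) (Iic t) = ENNReal.ofReal (G t) := by
  rw [withDensity_apply _ measurableSet_Iic,
    ← ofReal_integral_eq_lintegral_ofReal hg.integrableOn (ae_of_all _ hg0),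
    integral_Iic_of_hasDerivAt_of_tendsto' (fun x _ => hG x) hg.integrableOn hbot, sub_zero]

lemma hasDerivAt_integral_Iic {f : ℝ → ℝ} (hf : Integrable f) {x : ℝ} (hx : ContinuousAt f x) :
    HasDerivAt (fun y => ∫ t in Iic y, f t) (f x) x := by
  have heq : (fun y => ∫ t in Iic y, f t) =
      fun y => (∫ t in Iic 0, f t) + ∫ t in (0 : ℝ)..y, f t := by
    ext y
    rw [← intervalIntegral.integral_Iic_sub_Iic hf.integrableOn hf.integrableOn, add_sub_cancel]
  rw [heq]
  exact (intervalIntegral.integral_hasDerivAt_right hf.intervalIntegrable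
    (hf.aestronglyMeasurable.stronglyMeasurableAtFilter) hx).const_add _

section Density

variable {ν : Measure ℝ} {f : ℝ → ℝ}

lemma integrable_of_eq_withDensity [IsFiniteMeasure ν]
    (hν : ν = volume.withDensity fun x => ENNReal.ofReal (f x)) (hfm : AEStronglyMeasurable f)
    (hf0 : 0 ≤ f) : Integrable f := by
  refine ⟨hfm, (hasFiniteIntegral_iff_ofReal (ae_of_all _ hf0)).2 ?_⟩
  rw [← setLIntegral_univ, ← withDensity_apply _ MeasurableSet.univ, ← hν]
  exact measure_lt_top ν univ

lemma cdf_eq_integral_Iic_of_eq_withDensity [IsProbabilityMeasure ν]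
    (hν : ν = volume.withDensity fun x => ENNReal.ofReal (f x)) (hfm : AEStronglyMeasurable f)
    (hf0 : 0 ≤ f) (x : ℝ) : cdf ν x = ∫ t in Iic x, f t := by
  rw [cdf_eq_real, measureReal_def, hν, withDensity_apply _ measurableSet_Iic,
    integral_eq_lintegral_of_nonneg_ae (ae_of_all _ hf0) hfm.restrict]

lemma hasDerivAt_cdf_of_eq_withDensity [IsProbabilityMeasure ν]
    (hν : ν = volume.withDensity fun x => ENNReal.ofReal (f x)) (hf : Continuous f) (hf0 : 0 ≤ f)
    (x : ℝ) : HasDerivAt (cdf ν) (f x) x := by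
  rw [funext (cdf_eq_integral_Iic_of_eq_withDensity hν hf.aestronglyMeasurable hf0)]
  exact hasDerivAt_integral_Iic (integrable_of_eq_withDensity hν hf.aestronglyMeasurable hf0)
    hf.continuousAt

end Density

theorem ProbabilityTheory.IndepFun.map_comp_eq_map_prod_self {Ω β γ : Type*} [MeasurableSpace Ω]
    [MeasurableSpace β] [MeasurableSpace γ] {μ : Measure Ω} [IsFiniteMeasure μ] {A B : Ω → β}
    (hind : IndepFun A B μ) (hid : IdentDistrib A B μ μ) {g : β × β → γ} (hg : Measurable g) :
    μ.map (fun ω => g (A ω, B ω)) = ((μ.map A).prod (μ.map A)).map g := by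
  have hprod := hind.map_prod_eq_prod_map_map hid.aemeasurable_fst hid.aemeasurable_snd
  rw [← hid.map_eq] at hprod
  rw [← hprod, AEMeasurable.map_map_of_aemeasurable hg.aemeasurable
    (hid.aemeasurable_fst.prodMk hid.aemeasurable_snd)]
  rfl

theorem map_prod_signedMin_eq_withDensity {ν : Measure ℝ} [IsProbabilityMeasure ν] {f : ℝ → ℝ}
    (hν : ν = volume.withDensity fun x => ENNReal.ofReal (f x)) (hf : Continuous f)
    (hf0 : 0 ≤ f) :
    (ν.prod ν).map (fun p => signedMin p.1 p.2) =
      volume.withDensity fun x => ENNReal.ofReal (signedMinDensity f (cdf ν) x) := by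
  have hderiv := hasDerivAt_cdf_of_eq_withDensity hν hf hf0
  have hcont : Continuous (cdf ν) :=
    continuous_iff_continuousAt.2 fun x => (hderiv x).continuousAt
  have hint := integrable_signedMinDensity
    (integrable_of_eq_withDensity hν hf.aestronglyMeasurable hf0) hf0 hcont
    (cdf_nonneg ν) (cdf_le_one ν)
  have : NullSingletonClass ν := hν ▸ inferInstance
  refine Measure.ext_of_Iic _ _ fun t => ?_
  rw [Measure.map_apply measurable_signedMin measurableSet_Iic, ← ofReal_measureReal,
    withDensity_Iic_of_hasDerivAt hint (signedMinDensity_nonneg hf0 (cdf_nonneg ν) (cdf_le_one ν))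
      (hasDerivAt_signedMinCDF hderiv (monotone_cdf ν))
      (tendsto_signedMinCDF_atBot (tendsto_cdf_atBot ν) (tendsto_cdf_atTop ν))]
  exact congrArg ENNReal.ofReal (measureReal_prod_signedMin_le ν t)

theorem density_of_signed_min_general
    {Ω : Type*} [MeasurableSpace Ω] (μ : Measure Ω) [IsProbabilityMeasure μ]
    (A B : Ω → ℝ)
    (hindep : IndepFun A B μ)
    (hid : IdentDistrib A B μ μ)
    (f : ℝ → ℝ) (hf_cont : Continuous f) (hf_nonneg : ∀ x, 0 ≤ f x)
    (hf_density : μ.map A = volume.withDensity (fun x => ENNReal.ofReal (f x)))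
    (F : ℝ → ℝ) (hF : ∀ x, F x = ∫ t in Set.Iic x, f t)
    (X : Ω → ℝ)
    (hX : ∀ ω, X ω = Real.sign (A ω) * Real.sign (B ω) * min |A ω| |B ω|) :
    μ.map X = volume.withDensity
      (fun x => ENNReal.ofReal (2 * f x * (1 - F |x|) + 2 * f (-x) * F (-|x|))) := by
  have : IsProbabilityMeasure (μ.map A) := Measure.isProbabilityMeasure_map hid.aemeasurable_fst
  have hF_cdf : F = cdf (μ.map A) := funext fun x =>
    (hF x).trans (cdf_eq_integral_Iic_of_eq_withDensity hf_density
      hf_cont.aestronglyMeasurable hf_nonneg x).symm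
  have hX_signedMin : X = fun ω => signedMin (A ω) (B ω) := funext hX
  rw [hX_signedMin, hindep.map_comp_eq_map_prod_self hid measurable_signedMin,
    map_prod_signedMin_eq_withDensity hf_density hf_cont hf_nonneg, hF_cdf]
  rfl

theorem density_of_signed_min
    {Ω : Type*} [MeasurableSpace Ω] (μ : Measure Ω) [IsProbabilityMeasure μ]
    (A B : Ω → ℝ) (hA : Measurable A) (hB : Measurable B)
    (hindep : IndepFun A B μ)
    (hid : IdentDistrib A B μ μ)
    (f : ℝ → ℝ) (hf_cont : Continuous f) (hf_nonneg : ∀ x, 0 ≤ f x)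
    (hf_density : μ.map A = volume.withDensity (fun x => ENNReal.ofReal (f x)))
    (F : ℝ → ℝ) (hF : ∀ x, F x = ∫ t in Set.Iic x, f t)
    (X : Ω → ℝ)
    (hX : ∀ ω, X ω = Real.sign (A ω) * Real.sign (B ω) * min |A ω| |B ω|) :
    μ.map X = volume.withDensity
      (fun x => ENNReal.ofReal (2 * f x * (1 - F |x|) + 2 * f (-x) * F (-|x|))) :=
  density_of_signed_min_general μ A B hindep hid f hf_cont hf_nonneg hf_density F hF X hX
end
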